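/- arXiv:1208.3518 — 3 statements merged into one kernel-verified Lean document; each statement's English description precedes it below -/
import Mathlib

section
/- If A and B are Hermitian positive definite n×n matrices with A ≥ B > 0 (in the Loewner order) and 0 ≤ γ ≤ 1, then A^γ ≥ B^γ. -/
open scoped Matrix.Norms.L2Operator ComplexOrder
open Matrix MeasureTheory

/-- The real power of a matrix, defined for Hermitian matrices via the spectral
decomposition (and junk value `X` otherwise). -/
noncomputable def mpow {n : Type*} [Fintype n] [DecidableEq n] (X : Matrix n n ℂ) (p : ℝ) :
    Matrix n n ℂ :=
  if hX : X.IsHermitian then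
    (hX.eigenvectorUnitary : Matrix n n ℂ) *
      Matrix.diagonal (fun i => ((hX.eigenvalues i ^ p : ℝ) : ℂ)) *
      (star hX.eigenvectorUnitary : Matrix n n ℂ)
  else X

section LHaux

open Set

variable {n : Type*} [Fintype n] [DecidableEq n]

/-! ### Algebra of unitary conjugations of diagonal matrices -/

section unitaryConj
variable {U : Matrix n n ℂ}

lemma UdU_mul (hU : U ∈ unitaryGroup n ℂ) (d e : n → ℂ) :
    (U * diagonal d * star U) * (U * diagonal e * star U)
      = U * diagonal (fun i => d i * e i) * star U := by
  have h : star U * U = 1 := Unitary.star_mul_self_of_mem hU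
  rw [show (U * diagonal d * star U) * (U * diagonal e * star U)
      = U * (diagonal d * (star U * U) * diagonal e) * star U by noncomm_ring, h, mul_one,
    diagonal_mul_diagonal]

lemma UdU_one (hU : U ∈ unitaryGroup n ℂ) :
    U * Matrix.diagonal (fun _ => (1:ℂ)) * star U = 1 := by
  have h : U * star U = 1 := Unitary.mul_star_self_of_mem hU
  have : Matrix.diagonal (fun _ : n => (1:ℂ)) = 1 := diagonal_one
  rw [this, mul_one, h]

lemma UdU_add (d e : n → ℂ) :
    (U * diagonal d * star U) + (U * diagonal e * star U)
      = U * diagonal (fun i => d i + e i) * star U := by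
  rw [← add_mul, ← mul_add, diagonal_add]

lemma UdU_sub (d e : n → ℂ) :
    (U * diagonal d * star U) - (U * diagonal e * star U)
      = U * diagonal (fun i => d i - e i) * star U := by
  rw [← sub_mul, ← mul_sub, diagonal_sub]

lemma UdU_smul (c : ℂ) (d : n → ℂ) :
    c • (U * diagonal d * star U) = U * diagonal (fun i => c * d i) * star U := by
  rw [← smul_mul_assoc, ← mul_smul_comm, ← diagonal_smul]
  rfl

lemma UdU_inv (hU : U ∈ unitaryGroup n ℂ) (d : n → ℂ) (hd : ∀ i, d i ≠ 0) :
    (U * diagonal d * star U)⁻¹ = U * diagonal (fun i => (d i)⁻¹) * star U := by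
  apply inv_eq_right_inv
  rw [UdU_mul hU]
  have : (fun i => d i * (d i)⁻¹) = fun _ => (1:ℂ) := by
    funext i; exact mul_inv_cancel₀ (hd i)
  rw [this, UdU_one hU]

lemma UdU_isHermitian (d : n → ℝ) :
    (U * diagonal (fun i => (d i : ℂ)) * star U).IsHermitian := by
  rw [star_eq_conjTranspose]
  refine isHermitian_mul_mul_conjTranspose U ?_
  refine isHermitian_diagonal_of_self_adjoint _ (funext fun i => ?_)
  simp [Complex.conj_ofReal]

lemma UdU_qform (d : n → ℝ) (x : n → ℂ) :
    star x ⬝ᵥ (U * diagonal (fun i => (d i : ℂ)) * star U) *ᵥ x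
      = ((∑ i, d i * Complex.normSq ((Uᴴ *ᵥ x) i) : ℝ) : ℂ) := by
  rw [star_eq_conjTranspose]
  have h1 : star x ⬝ᵥ (U * diagonal (fun i => (d i : ℂ)) * Uᴴ) *ᵥ x
      = star (Uᴴ *ᵥ x) ⬝ᵥ diagonal (fun i => (d i : ℂ)) *ᵥ (Uᴴ *ᵥ x) := by
    rw [← mulVec_mulVec, ← mulVec_mulVec, dotProduct_mulVec, star_mulVec,
      conjTranspose_conjTranspose]
  rw [h1]
  set y := Uᴴ *ᵥ x
  simp only [dotProduct, mulVec_diagonal, Pi.star_apply, Complex.ofReal_sum]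
  refine Finset.sum_congr rfl fun i _ => ?_
  push_cast
  rw [Complex.star_def, mul_left_comm, Complex.normSq_eq_conj_mul_self]

end unitaryConj

/-! ### Antitonicity of the matrix inverse -/

lemma conj_posDef {B R : Matrix n n ℂ} (hB : B.PosDef) (hR : R.IsHermitian)
    (hRu : IsUnit R.det) : (R * B * R).PosDef := by
  have herm : (R * B * R).IsHermitian := by
    unfold IsHermitian
    rw [conjTranspose_mul, conjTranspose_mul, hR.eq, hB.1.eq, mul_assoc]
  refine PosDef.of_dotProduct_mulVec_pos herm fun x hx => ?_
  have hq : star x ⬝ᵥ (R * B * R) *ᵥ x = star (R *ᵥ x) ⬝ᵥ B *ᵥ (R *ᵥ x) := by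
    rw [← mulVec_mulVec, ← mulVec_mulVec, dotProduct_mulVec, star_mulVec, hR.eq]
  rw [hq]
  refine hB.dotProduct_mulVec_pos fun h => hx ?_
  have hinj := mulVec_injective_iff_isUnit.mpr (isUnit_iff_isUnit_det R |>.mpr hRu)
  exact hinj (h.trans (Matrix.mulVec_zero R).symm)

open scoped MatrixOrder in
lemma inv_antitone {A B : Matrix n n ℂ} (hA : A.PosDef) (hB : B.PosDef)
    (hAB : (A - B).PosSemidef) : (B⁻¹ - A⁻¹).PosSemidef := by
  set S := CFC.sqrt A with hSdef
  have hS : S.PosSemidef := Matrix.nonneg_iff_posSemidef.mp (CFC.sqrt_nonneg A)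
  have hSS : S * S = A := CFC.sqrt_mul_sqrt_self A hA.posSemidef.nonneg
  have hdetS : IsUnit S.det := by
    have hdA : A.det ≠ 0 := hA.det_pos.ne'
    rw [← hSS, det_mul] at hdA
    exact (mul_ne_zero_iff.mp hdA).1.isUnit
  set R := S⁻¹ with hRdef
  have hR : R.IsHermitian := hS.1.inv
  have hRS : R * S = 1 := nonsing_inv_mul S hdetS
  have hSR : S * R = 1 := mul_nonsing_inv S hdetS
  have hdetR : IsUnit R.det := isUnit_nonsing_inv_det S hdetS
  have hRAR : R * A * R = 1 := by
    rw [← hSS, show R * (S * S) * R = (R * S) * (S * R) by noncomm_ring, hRS, hSR, one_mul]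
  have hRR : R * R = A⁻¹ := by rw [hRdef, ← Matrix.mul_inv_rev, hSS]
  set C := R * B * R with hCdef
  have hC : C.PosDef := conj_posDef hB hR hdetR
  have h1C : (1 - C).PosSemidef := by
    have := hAB.mul_mul_conjTranspose_same R
    rwa [hR.eq, mul_sub, sub_mul, hRAR] at this
  set T := CFC.sqrt C with hTdef
  have hT : T.PosSemidef := Matrix.nonneg_iff_posSemidef.mp (CFC.sqrt_nonneg C)
  have hTT : T * T = C := CFC.sqrt_mul_sqrt_self C hC.posSemidef.nonneg
  have hdetT : IsUnit T.det := by
    have hdC : C.det ≠ 0 := hC.det_pos.ne'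
    rw [← hTT, det_mul] at hdC
    exact (mul_ne_zero_iff.mp hdC).1.isUnit
  set Q := T⁻¹ with hQdef
  have hQ : Q.IsHermitian := hT.1.inv
  have hTQ : T * Q = 1 := mul_nonsing_inv T hdetT
  have hQT : Q * T = 1 := nonsing_inv_mul T hdetT
  have hQQ : Q * Q = C⁻¹ := by rw [hQdef, ← Matrix.mul_inv_rev, hTT]
  have hQCQ : Q * C * Q = 1 := by
    rw [← hTT, show Q * (T * T) * Q = (Q * T) * (T * Q) by noncomm_ring, hQT, hTQ, one_mul]
  have hkey : (C⁻¹ - 1).PosSemidef := by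
    have := h1C.mul_mul_conjTranspose_same Q
    rwa [hQ.eq, mul_sub, sub_mul, mul_one, hQQ, hQCQ] at this
  have hRinv : R⁻¹ = S := nonsing_inv_nonsing_inv S hdetS
  have hCinv : C⁻¹ = S * B⁻¹ * S := by
    rw [hCdef, Matrix.mul_inv_rev, Matrix.mul_inv_rev, hRinv, ← mul_assoc]
  have final := hkey.mul_mul_conjTranspose_same R
  rw [hR.eq, mul_sub, sub_mul, mul_one, hRR, hCinv] at final
  have : R * (S * B⁻¹ * S) * R = B⁻¹ := by
    rw [show R * (S * B⁻¹ * S) * R = (R * S) * B⁻¹ * (S * R) by noncomm_ring, hRS, hSR,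
      one_mul, mul_one]
  rwa [this] at final

/-! ### The scalar integral representation of `x ^ γ` -/

variable {γ : ℝ}

/-- The normalizing integral of the representation `x ^ γ = c ∫ t^(γ-1) x/(x+t)`. -/
noncomputable def Ig (γ : ℝ) : ℝ := ∫ s in Ioi (0:ℝ), s ^ (γ-1) / (1+s)

lemma LH_hmeas : Measurable (fun s : ℝ => s ^ (γ-1) / (1+s)) :=
  (measurable_id.pow_const _).div (measurable_const.add measurable_id)

lemma Ig_integrable (h0 : 0 < γ) (h1 : γ < 1) :
    IntegrableOn (fun s : ℝ => s ^ (γ-1) / (1+s)) (Ioi 0) := by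
  have hsplit : Ioc (0:ℝ) 1 ∪ Ioi 1 = Ioi 0 := Ioc_union_Ioi_eq_Ioi zero_le_one
  rw [← hsplit]
  refine IntegrableOn.union ?_ ?_
  · have hbase : IntegrableOn (fun s : ℝ => s ^ (γ-1)) (Ioc (0:ℝ) 1) := by
      have := intervalIntegral.intervalIntegrable_rpow' (r := γ-1) (a := 0) (b := 1)
        (by linarith)
      rwa [intervalIntegrable_iff_integrableOn_Ioc_of_le zero_le_one] at this
    refine Integrable.mono hbase (LH_hmeas.aestronglyMeasurable.restrict) ?_
    filter_upwards [ae_restrict_mem measurableSet_Ioc] with s hs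
    have hs0 : 0 < s := hs.1
    have hpow : 0 ≤ s ^ (γ-1) := Real.rpow_nonneg hs0.le _
    rw [Real.norm_eq_abs, Real.norm_eq_abs, abs_of_nonneg hpow,
      abs_of_nonneg (div_nonneg hpow (by linarith))]
    exact div_le_self hpow (by linarith) |>.trans_eq rfl
  · have hbase : IntegrableOn (fun s : ℝ => s ^ (γ-2)) (Ioi (1:ℝ)) :=
      integrableOn_Ioi_rpow_of_lt (by linarith) one_pos
    refine Integrable.mono hbase (LH_hmeas.aestronglyMeasurable.restrict) ?_
    filter_upwards [ae_restrict_mem measurableSet_Ioi] with s hs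
    have hs1 : (1:ℝ) < s := hs
    have hs0 : 0 < s := lt_trans one_pos hs1
    have hpow : 0 ≤ s ^ (γ-1) := Real.rpow_nonneg hs0.le _
    rw [Real.norm_eq_abs, Real.norm_eq_abs,
      abs_of_nonneg (div_nonneg hpow (by linarith)),
      abs_of_nonneg (Real.rpow_nonneg hs0.le _)]
    have h2 : s ^ (γ-1) / (1+s) ≤ s ^ (γ-1) / s :=
      div_le_div_of_nonneg_left hpow hs0 (by linarith)
    have h3 : s ^ (γ-2) = s ^ (γ-1) / s := by
      rw [show γ-2 = (γ-1)-1 by ring, Real.rpow_sub hs0, Real.rpow_one]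
    rw [h3]
    exact h2

lemma Ig_pos (h0 : 0 < γ) (h1 : γ < 1) : 0 < Ig γ := by
  rw [Ig]
  refine (setIntegral_pos_iff_support_of_nonneg_ae ?_ (Ig_integrable h0 h1)).mpr ?_
  · filter_upwards [ae_restrict_mem measurableSet_Ioi] with s hs
    have hs0 : (0:ℝ) < s := hs
    exact (div_pos (Real.rpow_pos_of_pos hs0 _) (by linarith)).le
  · have : (Function.support fun s : ℝ => s ^ (γ-1) / (1+s)) ∩ Ioi 0 = Ioi 0 := by
      refine inter_eq_right.mpr fun s hs => ?_
      have hs0 : (0:ℝ) < s := hs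
      exact (div_pos (Real.rpow_pos_of_pos hs0 _) (by linarith)).ne'
    rw [this]
    simp

lemma key_eqOn {l : ℝ} (hl : 0 < l) :
    EqOn (fun t : ℝ => t ^ (γ-1) * (l / (l + t)))
      (fun t : ℝ => l ^ (γ-1) * ((l⁻¹ * t) ^ (γ-1) / (1 + l⁻¹ * t))) (Ioi 0) := by
  intro t ht
  have ht0 : (0:ℝ) < t := ht
  have hlt : l + t ≠ 0 := by positivity
  have hp : (0:ℝ) < l ^ (γ-1) := Real.rpow_pos_of_pos hl _
  simp only
  rw [Real.mul_rpow (inv_nonneg.mpr hl.le) ht0.le, Real.inv_rpow hl.le]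
  rw [show 1 + l⁻¹ * t = (l + t) / l by field_simp]
  field_simp

lemma scaled_integrable {l : ℝ} (hl : 0 < l) (h0 : 0 < γ) (h1 : γ < 1) :
    IntegrableOn (fun t : ℝ => t ^ (γ-1) * (l / (l + t))) (Ioi 0) := by
  have h2 : IntegrableOn (fun t : ℝ => (l⁻¹ * t) ^ (γ-1) / (1 + l⁻¹ * t)) (Ioi 0) := by
    have := (integrableOn_Ioi_comp_mul_left_iff
      (fun s : ℝ => s ^ (γ-1) / (1+s)) 0 (inv_pos.mpr hl)).mpr ?_
    · simpa using this
    · simpa using Ig_integrable h0 h1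
  exact IntegrableOn.congr_fun (h2.const_mul (l ^ (γ-1)))
    (fun t ht => (key_eqOn hl ht).symm) measurableSet_Ioi

lemma scaled_eq {l : ℝ} (hl : 0 < l) (h0 : 0 < γ) (h1 : γ < 1) :
    ∫ t in Ioi (0:ℝ), t ^ (γ-1) * (l / (l + t)) = l ^ γ * Ig γ := by
  rw [setIntegral_congr_fun measurableSet_Ioi (key_eqOn hl)]
  rw [integral_const_mul]
  have := integral_comp_mul_left_Ioi (fun s : ℝ => s ^ (γ-1) / (1+s)) 0 (inv_pos.mpr hl)
  simp only [mul_zero] at this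
  rw [this, smul_eq_mul, inv_inv, ← Ig]
  rw [← mul_assoc]
  congr 1
  nth_rewrite 2 [← Real.rpow_one l]
  rw [← Real.rpow_add hl]
  norm_num

/-! ### Spectral representations -/

section spectral
variable {X : Matrix n n ℂ}

lemma mpow_repr (hX : X.IsHermitian) (p : ℝ) :
    mpow X p = (hX.eigenvectorUnitary : Matrix n n ℂ) *
      diagonal (fun i => ((hX.eigenvalues i ^ p : ℝ) : ℂ)) *
      star (hX.eigenvectorUnitary : Matrix n n ℂ) := by
  rw [mpow, dif_pos hX]

lemma spectral_coe (hX : X.IsHermitian) :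
    X = (hX.eigenvectorUnitary : Matrix n n ℂ) *
      diagonal (fun i => ((hX.eigenvalues i : ℝ) : ℂ)) *
      star (hX.eigenvectorUnitary : Matrix n n ℂ) := by
  convert hX.spectral_theorem using 2
  rw [Unitary.conjStarAlgAut_apply]; rfl

lemma resolvent_repr (hX : X.PosDef) {t : ℝ} (ht : 0 < t) :
    1 - (t:ℂ) • (X + (t:ℂ) • 1)⁻¹
      = (hX.1.eigenvectorUnitary : Matrix n n ℂ) *
        diagonal (fun i => ((hX.1.eigenvalues i / (hX.1.eigenvalues i + t) : ℝ) : ℂ)) *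
        star (hX.1.eigenvectorUnitary : Matrix n n ℂ) := by
  have hU : (hX.1.eigenvectorUnitary : Matrix n n ℂ) ∈ unitaryGroup n ℂ :=
    hX.1.eigenvectorUnitary.2
  set U := (hX.1.eigenvectorUnitary : Matrix n n ℂ)
  set lam := hX.1.eigenvalues
  have hlam : ∀ i, 0 < lam i := hX.eigenvalues_pos
  have hone : (1 : Matrix n n ℂ) = U * Matrix.diagonal (fun _ => (1:ℂ)) * star U := (UdU_one hU).symm
  have hsmul1 : (t:ℂ) • (1 : Matrix n n ℂ) = U * Matrix.diagonal (fun _ => (t:ℂ)) * star U := by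
    rw [hone, UdU_smul]; simp
  have hadd : X + (t:ℂ) • 1 = U * diagonal (fun i => ((lam i + t : ℝ) : ℂ)) * star U := by
    rw [spectral_coe hX.1, hsmul1, UdU_add]
    congr 1
    · congr 1; funext i; push_cast; ring
  have hne : ∀ i, ((lam i + t : ℝ) : ℂ) ≠ 0 := fun i =>
    Complex.ofReal_ne_zero.mpr (add_pos (hlam i) ht).ne'
  have hinv : (X + (t:ℂ) • 1)⁻¹ = U * diagonal (fun i => (((lam i + t : ℝ) : ℂ))⁻¹) * star U := by
    rw [hadd, UdU_inv hU _ hne]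
  rw [hinv, UdU_smul, hone, UdU_sub]
  congr 1
  congr 1
  apply congrArg
  funext i
  have h0 : ((lam i + t : ℝ) : ℂ) ≠ 0 := hne i
  push_cast at h0 ⊢
  field_simp
  ring

lemma mpow_zero' (hX : X.IsHermitian) : mpow X 0 = 1 := by
  rw [mpow_repr hX]
  have : (fun i => ((hX.eigenvalues i ^ (0:ℝ) : ℝ) : ℂ)) = fun _ : n => (1:ℂ) := by
    funext i; rw [Real.rpow_zero]; norm_num
  rw [this, UdU_one hX.eigenvectorUnitary.2]

lemma mpow_one' (hX : X.IsHermitian) : mpow X 1 = X := by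
  rw [mpow_repr hX]
  have : (fun i => ((hX.eigenvalues i ^ (1:ℝ) : ℝ) : ℂ))
      = fun i => ((hX.eigenvalues i : ℝ) : ℂ) := by
    funext i; rw [Real.rpow_one]
  rw [this, ← spectral_coe hX]

end spectral

end LHaux

/-- Löwner–Heinz: if `A ≥ B > 0` and `0 ≤ γ ≤ 1` then `A^γ ≥ B^γ`. -/
theorem loewner_heinz {n : Type*} [Fintype n] [DecidableEq n]
    (A B : Matrix n n ℂ) (hA : A.PosDef) (hB : B.PosDef)
    (hAB : (A - B).PosSemidef) (γ : ℝ) (hγ0 : 0 ≤ γ) (hγ1 : γ ≤ 1) :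
    (mpow A γ - mpow B γ).PosSemidef := by
  open Set in
  rcases eq_or_lt_of_le hγ0 with h0 | h0
  · rw [← h0, mpow_zero' hA.1, mpow_zero' hB.1, sub_self]
    exact Matrix.PosSemidef.zero
  rcases eq_or_lt_of_le hγ1 with h1 | h1
  · rw [h1, mpow_one' hA.1, mpow_one' hB.1]
    exact hAB
  -- now 0 < γ < 1
  set lA := hA.1.eigenvalues with hlAdef
  set lB := hB.1.eigenvalues with hlBdef
  have hlA : ∀ i, 0 < lA i := hA.eigenvalues_pos
  have hlB : ∀ i, 0 < lB i := hB.eigenvalues_pos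
  refine PosSemidef.of_dotProduct_mulVec_nonneg ?_ ?_
  · exact ((mpow_repr hA.1 γ) ▸ UdU_isHermitian (fun i => lA i ^ γ)).sub
      ((mpow_repr hB.1 γ) ▸ UdU_isHermitian (fun i => lB i ^ γ))
  intro x
  set wA := fun i => Complex.normSq (((hA.1.eigenvectorUnitary : Matrix n n ℂ)ᴴ *ᵥ x) i)
    with hwAdef
  set wB := fun i => Complex.normSq (((hB.1.eigenvectorUnitary : Matrix n n ℂ)ᴴ *ᵥ x) i)
    with hwBdef
  have hwA : ∀ i, 0 ≤ wA i := fun i => Complex.normSq_nonneg _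
  have hwB : ∀ i, 0 ≤ wB i := fun i => Complex.normSq_nonneg _
  have hqA : star x ⬝ᵥ mpow A γ *ᵥ x = ((∑ i, lA i ^ γ * wA i : ℝ) : ℂ) := by
    rw [mpow_repr hA.1 γ, UdU_qform]
  have hqB : star x ⬝ᵥ mpow B γ *ᵥ x = ((∑ i, lB i ^ γ * wB i : ℝ) : ℂ) := by
    rw [mpow_repr hB.1 γ, UdU_qform]
  rw [sub_mulVec, dotProduct_sub, hqA, hqB, ← Complex.ofReal_sub, Complex.zero_le_real,
    sub_nonneg]
  -- the integrands
  set gA := fun t : ℝ => ∑ i, t ^ (γ-1) * (lA i / (lA i + t)) * wA i with hgAdef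
  set gB := fun t : ℝ => ∑ i, t ^ (γ-1) * (lB i / (lB i + t)) * wB i with hgBdef
  have hgAint : IntegrableOn gA (Ioi 0) :=
    integrable_finset_sum _ fun i _ => (scaled_integrable (hlA i) h0 h1).mul_const (wA i)
  have hgBint : IntegrableOn gB (Ioi 0) :=
    integrable_finset_sum _ fun i _ => (scaled_integrable (hlB i) h0 h1).mul_const (wB i)
  have hIA : ∫ t in Ioi (0:ℝ), gA t = (∑ i, lA i ^ γ * wA i) * Ig γ := by
    rw [hgAdef]
    rw [integral_finset_sum _ fun i _ => (scaled_integrable (hlA i) h0 h1).mul_const (wA i)]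
    rw [Finset.sum_mul]
    refine Finset.sum_congr rfl fun i _ => ?_
    rw [integral_mul_const, scaled_eq (hlA i) h0 h1]
    ring
  have hIB : ∫ t in Ioi (0:ℝ), gB t = (∑ i, lB i ^ γ * wB i) * Ig γ := by
    rw [hgBdef]
    rw [integral_finset_sum _ fun i _ => (scaled_integrable (hlB i) h0 h1).mul_const (wB i)]
    rw [Finset.sum_mul]
    refine Finset.sum_congr rfl fun i _ => ?_
    rw [integral_mul_const, scaled_eq (hlB i) h0 h1]
    ring
  -- pointwise comparison
  have hmono : ∀ t ∈ Ioi (0:ℝ), gB t ≤ gA t := by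
    intro t ht
    have ht0 : (0:ℝ) < t := ht
    have hsmul_psd : ((t:ℂ) • (1 : Matrix n n ℂ)).PosSemidef := by
      rw [smul_one_eq_diagonal]
      exact PosSemidef.diagonal fun i => Complex.zero_le_real.mpr ht0.le
    have hApd : (A + (t:ℂ) • 1).PosDef := hA.add_posSemidef hsmul_psd
    have hBpd : (B + (t:ℂ) • 1).PosDef := hB.add_posSemidef hsmul_psd
    have hsub : ((A + (t:ℂ) • 1) - (B + (t:ℂ) • 1)).PosSemidef := by
      simpa [add_sub_add_right_eq_sub] using hAB
    have hq := (inv_antitone hApd hBpd hsub).dotProduct_mulVec_nonneg x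
    have hMA : star x ⬝ᵥ (1 - (t:ℂ) • (A + (t:ℂ) • 1)⁻¹) *ᵥ x
        = ((∑ i, (lA i / (lA i + t)) * wA i : ℝ) : ℂ) := by
      rw [resolvent_repr hA ht0, UdU_qform]
    have hMB : star x ⬝ᵥ (1 - (t:ℂ) • (B + (t:ℂ) • 1)⁻¹) *ᵥ x
        = ((∑ i, (lB i / (lB i + t)) * wB i : ℝ) : ℂ) := by
      rw [resolvent_repr hB ht0, UdU_qform]
    have hdiff : (1 - (t:ℂ) • (A + (t:ℂ) • 1)⁻¹) - (1 - (t:ℂ) • (B + (t:ℂ) • 1)⁻¹)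
        = (t:ℂ) • ((B + (t:ℂ) • 1)⁻¹ - (A + (t:ℂ) • 1)⁻¹) := by
      rw [smul_sub]; abel
    have hcoe : ((∑ i, (lA i / (lA i + t)) * wA i - ∑ i, (lB i / (lB i + t)) * wB i : ℝ) : ℂ)
        = (t:ℂ) * (star x ⬝ᵥ ((B + (t:ℂ) • 1)⁻¹ - (A + (t:ℂ) • 1)⁻¹) *ᵥ x) := by
      rw [Complex.ofReal_sub, ← hMA, ← hMB, ← dotProduct_sub, ← sub_mulVec, hdiff,
        smul_mulVec, dotProduct_smul, smul_eq_mul]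
    have hnn : (0:ℝ) ≤ ∑ i, (lA i / (lA i + t)) * wA i - ∑ i, (lB i / (lB i + t)) * wB i := by
      rw [← Complex.zero_le_real, hcoe]
      exact mul_nonneg (Complex.zero_le_real.mpr ht0.le) hq
    have hgAt : gA t = t ^ (γ-1) * ∑ i, (lA i / (lA i + t)) * wA i := by
      rw [hgAdef, Finset.mul_sum]
      exact Finset.sum_congr rfl fun i _ => by ring
    have hgBt : gB t = t ^ (γ-1) * ∑ i, (lB i / (lB i + t)) * wB i := by
      rw [hgBdef, Finset.mul_sum]
      exact Finset.sum_congr rfl fun i _ => by ring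
    rw [hgAt, hgBt]
    have hrp : (0:ℝ) ≤ t ^ (γ-1) := Real.rpow_nonneg ht0.le _
    nlinarith [hnn, hrp]
  have hpos : 0 ≤ ∫ t in Ioi (0:ℝ), (gA t - gB t) :=
    setIntegral_nonneg measurableSet_Ioi fun t ht => sub_nonneg.mpr (hmono t ht)
  rw [integral_sub hgAint hgBint, hIA, hIB] at hpos
  have hIg := Ig_pos h0 h1
  nlinarith [hpos, hIg]
end

section
/- For any Hermitian positive definite n×n matrix X and any real q with 0 < q < 1, one has X^q = (sin(qπ)/π) ∫₀^∞ X^{1/2} (λI + X)^{-1} X^{1/2} λ^{q-1} dλ. -/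
open scoped Matrix.Norms.L2Operator ComplexOrder
open Matrix MeasureTheory

section ScalarAux

open Set Real

private lemma mir_scalar_integrable {a q : ℝ} (ha : 0 < a) (hq0 : 0 < q) (hq1 : q < 1) :
    IntegrableOn (fun l : ℝ => l ^ (q - 1) * (a / (l + a))) (Ioi 0) := by
  set f : ℝ → ℝ := fun l => l ^ (q - 1) * (a / (l + a)) with hf
  have hcont : ContinuousOn f (Ioi 0) := by
    apply ContinuousOn.mul
    · exact fun x hx => (Real.continuousAt_rpow_const x _ (Or.inl (ne_of_gt hx))).continuousWithinAt
    · exact continuousOn_const.div (by fun_prop)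
        (fun x hx => ne_of_gt (by have := mem_Ioi.mp hx; positivity))
  have hsplit : Ioc (0:ℝ) 1 ∪ Ioi 1 = Ioi 0 := Ioc_union_Ioi_eq_Ioi zero_le_one
  rw [← hsplit]
  apply IntegrableOn.union
  · have hbase : IntegrableOn (fun x : ℝ => x ^ (q - 1)) (Ioc 0 1) := by
      have h := intervalIntegral.intervalIntegrable_rpow' (a := 0) (b := 1)
        (r := q - 1) (by linarith)
      rwa [intervalIntegrable_iff_integrableOn_Ioc_of_le zero_le_one] at h
    refine Integrable.mono hbase
      ((hcont.mono Ioc_subset_Ioi_self).aestronglyMeasurable measurableSet_Ioc) ?_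
    filter_upwards [ae_restrict_mem measurableSet_Ioc] with x hx
    have hx0 : 0 < x := hx.1
    have h1 : a / (x + a) ≤ 1 := by
      rw [div_le_one (by positivity)]; linarith
    rw [Real.norm_eq_abs, Real.norm_eq_abs, abs_of_nonneg (by positivity),
      abs_of_nonneg (by positivity)]
    calc x ^ (q-1) * (a / (x+a)) ≤ x ^ (q-1) * 1 := by
          apply mul_le_mul_of_nonneg_left h1 (by positivity)
      _ = x ^ (q-1) := mul_one _
  · have hbase : IntegrableOn (fun x : ℝ => a * x ^ (q - 2)) (Ioi 1) :=
      (integrableOn_Ioi_rpow_of_lt (by linarith) one_pos).const_mul a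
    refine Integrable.mono hbase
      ((hcont.mono (Ioi_subset_Ioi zero_le_one)).aestronglyMeasurable measurableSet_Ioi) ?_
    filter_upwards [ae_restrict_mem measurableSet_Ioi] with x hx
    have hx1 : (1:ℝ) < x := hx
    have hx0 : 0 < x := by linarith
    rw [Real.norm_eq_abs, Real.norm_eq_abs, abs_of_nonneg (by positivity),
      abs_of_nonneg (by positivity)]
    have key : x ^ (q - 2) = x ^ (q-1) * x⁻¹ := by
      rw [← Real.rpow_neg_one x, ← Real.rpow_add hx0]; ring_nf
    have h1 : a / (x + a) ≤ a / x := by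
      apply div_le_div_of_nonneg_left ha.le hx0; linarith
    calc x ^ (q-1) * (a / (x+a)) ≤ x ^ (q-1) * (a / x) :=
          mul_le_mul_of_nonneg_left h1 (by positivity)
      _ = a * (x ^ (q-1) * x⁻¹) := by ring
      _ = a * x ^ (q-2) := by rw [← key]

private lemma mir_beta_val {q : ℝ} (hq0 : 0 < q) (hq1 : q < 1) :
    ∫ x in Ioo (0:ℝ) 1, x ^ (q-1) * (1-x) ^ (-q) = π / Real.sin (π * q) := by
  have h1 : Complex.Gamma q * Complex.Gamma (1 - q) =
      Complex.Gamma ((q:ℂ) + (1 - q)) * Complex.betaIntegral q (1-q) :=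
    Complex.Gamma_mul_Gamma_eq_betaIntegral (by simpa using hq0)
      (by simp [Complex.sub_re]; simpa using hq1)
  rw [show (q:ℂ) + (1-q) = 1 by ring, Complex.Gamma_one, one_mul,
    Complex.Gamma_mul_Gamma_one_sub] at h1
  have h2 : Complex.betaIntegral q (1-q) =
      ((∫ x in Ioo (0:ℝ) 1, x ^ (q-1) * (1-x) ^ (-q) : ℝ) : ℂ) := by
    rw [Complex.betaIntegral, intervalIntegral.integral_of_le zero_le_one,
      integral_Ioc_eq_integral_Ioo]
    have h4 : (∫ t in Ioo (0:ℝ) 1, ((t ^ (q-1) * (1-t)^(-q) : ℝ) : ℂ)) =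
        ((∫ x in Ioo (0:ℝ) 1, x ^ (q-1) * (1-x) ^ (-q) : ℝ) : ℂ) := integral_ofReal
    rw [← h4]
    refine setIntegral_congr_fun measurableSet_Ioo (fun x hx => ?_)
    show _ = ((x ^ (q-1) * (1-x) ^ (-q) : ℝ) : ℂ)
    have hx0 : (0:ℝ) ≤ x := hx.1.le
    have hx1 : (0:ℝ) ≤ 1 - x := by linarith [hx.2]
    rw [Complex.ofReal_mul, Complex.ofReal_cpow hx0, Complex.ofReal_cpow hx1]
    push_cast
    ring_nf
  rw [h2] at h1
  have h3 : Complex.sin (π * q) = ((Real.sin (π * q) : ℝ) : ℂ) := by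
    push_cast
    ring_nf
  rw [h3] at h1
  have hs : Real.sin (π * q) ≠ 0 := by
    apply ne_of_gt; apply Real.sin_pos_of_pos_of_lt_pi <;> nlinarith [Real.pi_pos]
  have := h1
  rw [show (π : ℂ) / ((Real.sin (π*q) : ℝ):ℂ) = (((π / Real.sin (π*q) : ℝ)):ℂ) by
    push_cast; ring] at this
  exact_mod_cast this.symm

private lemma mir_scalar_value {a q : ℝ} (ha : 0 < a) (hq0 : 0 < q) (hq1 : q < 1) :
    ∫ l in Ioi (0:ℝ), l ^ (q-1) * (a / (l + a)) = π / Real.sin (π * q) * a ^ q := by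
  set f : ℝ → ℝ := fun x => a * x / (1 - x) with hf
  have himg : f '' Ioo 0 1 = Ioi 0 := by
    apply Subset.antisymm
    · rintro _ ⟨x, hx, rfl⟩
      have h1 : 0 < x := hx.1
      have h2 : 0 < 1 - x := by linarith [hx.2]
      exact mem_Ioi.mpr (by positivity)
    · rintro t ht
      have ht0 : 0 < t := ht
      refine ⟨t / (t + a), ⟨by positivity, ?_⟩, ?_⟩
      · rw [div_lt_one (by positivity)]; linarith
      · show a * (t / (t+a)) / (1 - t / (t+a)) = t
        have h5 : 1 - t/(t+a) = a/(t+a) := by field_simp; ring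
        have hden : 1 - t/(t+a) ≠ 0 := by rw [h5]; positivity
        rw [div_eq_iff hden, h5]
        field_simp
  have hderiv : ∀ x ∈ Ioo (0:ℝ) 1, HasDerivWithinAt f (a / (1-x)^2) (Ioo 0 1) x := by
    intro x hx
    have h2 : 0 < 1 - x := by linarith [hx.2]
    have hd1 : HasDerivAt (fun x : ℝ => a * x) a x := by
      simpa using (hasDerivAt_id x).const_mul a
    have hd2 : HasDerivAt (fun x : ℝ => 1 - x) (-1) x := by
      simpa using (hasDerivAt_id x).const_sub 1
    have := hd1.div hd2 (ne_of_gt h2)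
    have heq : (a * (1-x) - a * x * (-1)) / (1-x)^2 = a / (1-x)^2 := by ring_nf
    rw [heq] at this
    exact this.hasDerivWithinAt
  have hinj : InjOn f (Ioo 0 1) := by
    rintro x hx y hy h
    have hx2 : 0 < 1 - x := by linarith [hx.2]
    have hy2 : 0 < 1 - y := by linarith [hy.2]
    have h' : a * x * (1 - y) = a * y * (1 - x) := by
      change a * x / (1 - x) = a * y / (1 - y) at h
      rw [div_eq_div_iff (ne_of_gt hx2) (ne_of_gt hy2)] at h
      linarith [h]
    have : a * x = a * y := by nlinarith
    exact mul_left_cancel₀ ha.ne' this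
  rw [← himg, integral_image_eq_integral_abs_deriv_smul measurableSet_Ioo hderiv hinj]
  have hcongr : ∀ x ∈ Ioo (0:ℝ) 1,
      |a / (1-x)^2| • (f x ^ (q-1) * (a / (f x + a))) = a ^ q * (x ^ (q-1) * (1-x) ^ (-q)) := by
    intro x hx
    have h1 : 0 < x := hx.1
    have h2 : 0 < 1 - x := by linarith [hx.2]
    have hfx : f x + a = a / (1-x) := by
      show a * x / (1 - x) + a = a / (1 - x)
      rw [div_add' _ _ _ h2.ne']; congr 1; ring
    have hfa : a / (f x + a) = 1 - x := by
      rw [hfx, div_div_eq_mul_div, mul_comm, mul_div_assoc, div_self ha.ne', mul_one]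
    have hpow : f x ^ (q-1) = a ^ (q-1) * x ^ (q-1) / (1-x) ^ (q-1) := by
      rw [hf]
      rw [Real.div_rpow (by positivity) h2.le, Real.mul_rpow ha.le h1.le]
    rw [hfa, hpow, smul_eq_mul, abs_of_nonneg (by positivity)]
    have e1 : (1-x) ^ (-q) = (1-x) / ((1-x)^2 * (1-x) ^ (q-1)) := by
      rw [eq_div_iff (by positivity)]
      rw [show ((1-x)^2 : ℝ) = (1-x) ^ (2:ℝ) by
        rw [← Real.rpow_natCast (1-x) 2]; norm_num]
      rw [← Real.rpow_add h2, ← Real.rpow_add h2,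
        show -q + (2 + (q-1)) = 1 by ring, Real.rpow_one]
    have e2 : a ^ q = a * a ^ (q-1) := by
      have h6 := Real.rpow_add ha 1 (q-1)
      rw [Real.rpow_one] at h6
      rw [← h6]
      norm_num
    rw [e1, e2]
    field_simp
  rw [setIntegral_congr_fun measurableSet_Ioo hcongr, integral_const_mul, mir_beta_val hq0 hq1]
  ring

end ScalarAux

private lemma mir_diagonal_eq_sum {n : Type*} [Fintype n] [DecidableEq n] (d : n → ℂ) :
    Matrix.diagonal d = ∑ k : n, d k • Matrix.single k k 1 := by
  ext i j
  simp only [Matrix.sum_apply, Matrix.smul_apply, Matrix.single, Matrix.of_apply,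
    Matrix.diagonal_apply, smul_eq_mul]
  by_cases hij : i = j
  · subst hij
    simp [Finset.sum_ite_eq' Finset.univ i]
  · simp only [hij, if_false]
    symm
    apply Finset.sum_eq_zero
    intro k _
    rw [if_neg, mul_zero]
    rintro ⟨rfl, rfl⟩
    exact hij rfl

/-- Integral representation of the fractional power of a positive definite matrix. -/
theorem mpow_integral_repr {n : Type*} [Fintype n] [DecidableEq n]
    (X : Matrix n n ℂ) (hX : X.PosDef) (q : ℝ) (hq0 : 0 < q) (hq1 : q < 1) :
    mpow X q = (Real.sin (q * Real.pi) / Real.pi) •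
      ∫ l in Set.Ioi (0:ℝ),
        (l ^ (q - 1)) •
          (mpow X (1/2) * (l • (1 : Matrix n n ℂ) + X)⁻¹ * mpow X (1/2)) := by
  classical
  have hH : X.IsHermitian := hX.isHermitian
  set U : Matrix n n ℂ := (hH.eigenvectorUnitary : Matrix n n ℂ) with hUdef
  set e : n → ℝ := hH.eigenvalues with hedef
  have hepos : ∀ i, 0 < e i := fun i => hX.eigenvalues_pos i
  have hUV : U * star U = 1 := Unitary.coe_mul_star_self _
  have hVU : star U * U = 1 := Unitary.coe_star_mul_self _
  set C : (n → ℂ) → Matrix n n ℂ := fun d => U * Matrix.diagonal d * star U with hCdef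
  have hCmul : ∀ d d' : n → ℂ, C d * C d' = C (fun i => d i * d' i) := by
    intro d d'
    simp only [hCdef]
    calc U * Matrix.diagonal d * star U * (U * Matrix.diagonal d' * star U)
        = U * Matrix.diagonal d * (star U * U) * Matrix.diagonal d' * star U := by
          simp only [Matrix.mul_assoc]
      _ = U * (Matrix.diagonal d * Matrix.diagonal d') * star U := by
          rw [hVU]; simp only [Matrix.mul_assoc, Matrix.one_mul]
      _ = _ := by rw [Matrix.diagonal_mul_diagonal]
  have hmpow : ∀ p : ℝ, mpow X p = C (fun i => ((e i ^ p : ℝ) : ℂ)) := by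
    intro p
    rw [mpow, dif_pos hH]
  have hXC : X = C (fun i => ((e i : ℝ) : ℂ)) := by
    conv_lhs => rw [hH.spectral_theorem]
    rfl
  have hsmul_one : ∀ l : ℝ, l • (1 : Matrix n n ℂ) = C (fun _ => (l : ℂ)) := by
    intro l
    have h1 : l • (1 : Matrix n n ℂ) = (l : ℂ) • (1 : Matrix n n ℂ) :=
      RCLike.real_smul_eq_coe_smul (K := ℂ) l 1
    rw [h1, Matrix.smul_one_eq_diagonal, hCdef]
    show _ = U * Matrix.diagonal _ * star U
    rw [← Matrix.smul_one_eq_diagonal, Matrix.mul_smul, Matrix.mul_one, Matrix.smul_mul, hUV,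
      Matrix.smul_one_eq_diagonal, ← Matrix.smul_one_eq_diagonal]
  have hres : ∀ l : ℝ, 0 < l →
      (l • (1 : Matrix n n ℂ) + X)⁻¹ = C (fun i => ((l : ℂ) + e i)⁻¹) := by
    intro l hl
    have hadd : l • (1 : Matrix n n ℂ) + X = C (fun i => (l : ℂ) + e i) := by
      rw [hsmul_one l]
      conv_lhs => rw [hXC]
      simp only [hCdef]
      rw [← Matrix.add_mul, ← Matrix.mul_add, Matrix.diagonal_add]
    rw [hadd]
    apply Matrix.inv_eq_right_inv
    rw [hCmul]
    have hne : ∀ i, (l : ℂ) + e i ≠ 0 := by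
      intro i
      rw [← Complex.ofReal_add]
      exact Complex.ofReal_ne_zero.mpr (ne_of_gt (by have := hepos i; linarith))
    have : (fun i => ((l : ℂ) + e i) * ((l : ℂ) + e i)⁻¹) = fun _ : n => (1 : ℂ) := by
      funext i; exact mul_inv_cancel₀ (hne i)
    rw [this, hCdef]
    show U * Matrix.diagonal _ * star U = 1
    rw [Matrix.diagonal_one, Matrix.mul_one, hUV]
  set g : n → ℝ → ℝ := fun k l => l ^ (q - 1) * (e k / (l + e k)) with hgdef
  set E : n → Matrix n n ℂ := fun k => U * Matrix.single k k 1 * star U with hEdef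
  have hCsum : ∀ d : n → ℂ, C d = ∑ k : n, d k • E k := by
    intro d
    simp only [hCdef, hEdef, mir_diagonal_eq_sum d, Finset.mul_sum, Finset.sum_mul,
      Matrix.mul_smul, Matrix.smul_mul]
  have hintegrand : ∀ l ∈ Set.Ioi (0:ℝ),
      (l ^ (q - 1)) • (mpow X (1/2) * (l • (1 : Matrix n n ℂ) + X)⁻¹ * mpow X (1/2)) =
      ∑ k : n, ((g k l : ℝ) : ℂ) • E k := by
    intro l hl
    have hl0 : 0 < l := hl
    rw [hmpow, hres l hl0, hCmul, hCmul]
    have hd : (fun i => ((e i ^ (1/2:ℝ) : ℝ) : ℂ) * ((l : ℂ) + e i)⁻¹ *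
        ((e i ^ (1/2:ℝ) : ℝ) : ℂ)) = fun i => (((e i / (l + e i) : ℝ)) : ℂ) := by
      funext i
      have h1 : ((l : ℂ) + e i)⁻¹ = (((l + e i)⁻¹ : ℝ) : ℂ) := by
        rw [← Complex.ofReal_add, ← Complex.ofReal_inv]
      rw [h1, ← Complex.ofReal_mul, ← Complex.ofReal_mul]
      congr 1
      have h2 : e i ^ (1/2:ℝ) * (l + e i)⁻¹ * e i ^ (1/2:ℝ)
          = e i ^ ((1:ℝ)/2 + 1/2) * (l + e i)⁻¹ := by
        rw [Real.rpow_add (hepos i)]; ring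
      rw [h2]
      norm_num
      rw [div_eq_mul_inv]
    rw [hd, hCsum, Finset.smul_sum]
    refine Finset.sum_congr rfl (fun k _ => ?_)
    rw [← smul_assoc, Complex.real_smul, ← Complex.ofReal_mul]
  rw [setIntegral_congr_fun measurableSet_Ioi hintegrand]
  have hInt : ∀ k : n, IntegrableOn (fun l : ℝ => ((g k l : ℝ) : ℂ) • E k) (Set.Ioi 0) :=
    fun k => ((mir_scalar_integrable (hepos k) hq0 hq1).ofReal (𝕜 := ℂ)).smul_const (E k)
  rw [integral_finset_sum _ (fun k _ => hInt k)]
  have hterm : ∀ k : n, (∫ l in Set.Ioi (0:ℝ), ((g k l : ℝ) : ℂ) • E k) =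
      ((Real.pi / Real.sin (Real.pi * q) * e k ^ q : ℝ) : ℂ) • E k := by
    intro k
    rw [integral_smul_const]
    congr 1
    have h4 : (∫ l in Set.Ioi (0:ℝ), ((g k l : ℝ) : ℂ)) =
        ((∫ l in Set.Ioi (0:ℝ), g k l : ℝ) : ℂ) := integral_ofReal
    rw [h4, mir_scalar_value (hepos k) hq0 hq1]
  simp only [hterm]
  rw [hmpow, hCsum, Finset.smul_sum]
  refine Finset.sum_congr rfl (fun k _ => ?_)
  rw [← smul_assoc, Complex.real_smul, ← Complex.ofReal_mul]
  congr 1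
  rw [Complex.ofReal_inj]
  have hs : Real.sin (Real.pi * q) ≠ 0 := by
    apply ne_of_gt; apply Real.sin_pos_of_pos_of_lt_pi <;> nlinarith [Real.pi_pos]
  rw [mul_comm q Real.pi]
  field_simp
end

section
/- Let ζ, θ, σ, ε be nonnegative reals with σ < 1 and ε < (1−σ)² / (ζ + σζ + 2θ + 2√((ζ+θ)(σζ+θ))). Then (1 + ζε − σ)² − 4ε(ζ + θ) ≥ 0, the quadratic (ζ+θ)x² − (1 + ζε − σ)x + ε = 0 has two positive real roots (when ζ + θ > 0), and its smaller root ν = 2ε/(1 + εζ − σ + √((1+ζε−σ)² − 4ε(ζ+θ))) satisfies ζν < 1. -/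
set_option maxHeartbeats 1000000 in
/-- Scalar feasibility lemma underlying the sharper perturbation bound. -/
theorem nu_lemma (ζ θ σ ε : ℝ) (hζ : 0 < ζ) (hθ : 0 ≤ θ) (hσ0 : 0 ≤ σ) (hσ : σ < 1)
    (hε0 : 0 < ε)
    (hε : ε < (1 - σ) ^ 2 /
      (ζ + σ * ζ + 2 * θ + 2 * Real.sqrt ((ζ + θ) * (σ * ζ + θ)))) :
    0 ≤ (1 + ζ * ε - σ) ^ 2 - 4 * ε * (ζ + θ) ∧
    (0 < ζ + θ → ∃ x y : ℝ, 0 < x ∧ 0 < y ∧ x ≠ y ∧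
      (ζ + θ) * x ^ 2 - (1 + ζ * ε - σ) * x + ε = 0 ∧
      (ζ + θ) * y ^ 2 - (1 + ζ * ε - σ) * y + ε = 0) ∧
    ζ * (2 * ε / (1 + ε * ζ - σ +
        Real.sqrt ((1 + ζ * ε - σ) ^ 2 - 4 * ε * (ζ + θ)))) < 1 := by
  set s := Real.sqrt ((ζ + θ) * (σ * ζ + θ)) with hs_def
  clear_value s
  have hs0 : 0 ≤ s := hs_def ▸ Real.sqrt_nonneg _
  have hBnn : 0 ≤ (ζ + θ) * (σ * ζ + θ) := by positivity
  have hs2 : s ^ 2 = (ζ + θ) * (σ * ζ + θ) := hs_def ▸ Real.sq_sqrt hBnn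
  have hA : 0 < ζ + σ * ζ + 2 * θ + 2 * s := by nlinarith
  have hkey : ε * (ζ + σ * ζ + 2 * θ + 2 * s) < (1 - σ) ^ 2 :=
    (lt_div_iff₀ hA).mp hε
  -- identity: (A - 2s)(A + 2s) = ζ²(1-σ)²
  have hident : (ζ + σ * ζ + 2 * θ - 2 * s) * (ζ + σ * ζ + 2 * θ + 2 * s)
      = ζ ^ 2 * (1 - σ) ^ 2 := by nlinarith [hs2]
  have h1 : ζ ^ 2 * ε < ζ + σ * ζ + 2 * θ - 2 * s := by
    nlinarith [mul_pos (mul_pos hζ hζ) hε0, mul_pos hζ hζ]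
  have f1 : 0 < ζ + σ * ζ + 2 * θ - 2 * s - ζ ^ 2 * ε := by linarith
  have f2 : 0 < ζ + σ * ζ + 2 * θ + 2 * s - ζ ^ 2 * ε := by linarith
  have hprod := mul_pos f1 f2
  have hD : 0 < (1 + ζ * ε - σ) ^ 2 - 4 * ε * (ζ + θ) := by
    nlinarith [hprod, hs2, mul_pos hζ hζ]
  set d := Real.sqrt ((1 + ζ * ε - σ) ^ 2 - 4 * ε * (ζ + θ)) with hd_def
  have hd0 : 0 < d := Real.sqrt_pos.mpr hD
  have hd2 : d ^ 2 = (1 + ζ * ε - σ) ^ 2 - 4 * ε * (ζ + θ) := Real.sq_sqrt hD.le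
  have hb : 0 < 1 + ζ * ε - σ := by nlinarith
  have ha : 0 < ζ + θ := by linarith
  have hdb : d < 1 + ζ * ε - σ := by
    rw [hd_def, Real.sqrt_lt' hb]
    nlinarith
  clear_value d
  refine ⟨hD.le, ?_, ?_⟩
  · intro _
    refine ⟨(1 + ζ * ε - σ - d) / (2 * (ζ + θ)), (1 + ζ * ε - σ + d) / (2 * (ζ + θ)),
      div_pos (by linarith) (by linarith), div_pos (by linarith) (by linarith), ?_, ?_, ?_⟩
    · intro h
      rw [div_eq_div_iff (by positivity) (by positivity)] at h
      nlinarith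
    · field_simp
      linear_combination hd2
    · field_simp
      linear_combination hd2
  · have hbd : 0 < 1 + ε * ζ - σ + d := by nlinarith
    have hζε : ζ * ε < (1 - σ) ^ 2 := by nlinarith
    rw [show ζ * (2 * ε / (1 + ε * ζ - σ + d)) = 2 * ζ * ε / (1 + ε * ζ - σ + d) by ring,
      div_lt_one hbd]
    nlinarith [sq_nonneg (1 - σ)]
end
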